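/- For every word v ∈ A* and all letters a_1, …, a_k ∈ A: (a_1⋯a_k) ⧢_q v = Σ q^{Σ_{i=0}^k (k−i)·|v_i|} · (v_0 a_1 v_1 a_2 ⋯ v_{k-1} a_k v_k), where the sum ranges over all factorizations v = v_0 v_1 ⋯ v_k with v_0, …, v_k ∈ A*. -/

import Mathlib

/-!
Reading words backwards turns the defining recursion of `u ⧢_q v` into a recursion on first
letters, which is `qShuffleAux`. For it the formula holds with exponent `Σ i·|vᵢ|`, by induction
along the recursion: a factorization of `b :: v` into `k + 1` factors either starts with an empty
factor, and then the first letter of `u` comes first and costs `q^{|b :: v|}`, or its first factor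
starts with `b`. Reversing the words and the factorization back turns `Σ i·|vᵢ|` into
`Σ (k - i)·|vᵢ|`.
-/

noncomputable def qShuffleAux {A : Type*} [DecidableEq A] :
    List A → List A → (List A →₀ Polynomial ℕ)
  | [], v => Finsupp.single v 1
  | a :: u, [] => Finsupp.single (a :: u) 1
  | a :: u, b :: v =>
      (Polynomial.X : Polynomial ℕ) ^ (v.length + 1) •
          Finsupp.mapDomain (a :: ·) (qShuffleAux u (b :: v)) +
        Finsupp.mapDomain (b :: ·) (qShuffleAux (a :: u) v)

/-- The `q`-shuffle `u ⧢_q v` of two words. -/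
noncomputable def qShuffle {A : Type*} [DecidableEq A] (u v : List A) :
    List A →₀ Polynomial ℕ :=
  Finsupp.mapDomain List.reverse (qShuffleAux u.reverse v.reverse)

/-- `glue [v₀, v₁, …, v_k] [a₁, …, a_k] = v₀ a₁ v₁ a₂ ⋯ v_{k-1} a_k v_k`. -/
def glue {A : Type*} : List (List A) → List A → List A
  | [], as => as
  | v0 :: vs, [] => v0 ++ glue vs []
  | v0 :: vs, a :: as => v0 ++ a :: glue vs as

section Factorizations

variable {A : Type*}

def factorizations (n : ℕ) (v : List A) : Set (List (List A)) :=
  {vs | vs.length = n ∧ vs.flatten = v}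

theorem factorizations_one (v : List A) : factorizations 1 v = {[v]} := by
  ext vs
  constructor
  · rintro ⟨hl, rfl⟩
    obtain ⟨w, rfl⟩ := List.length_eq_one_iff.mp hl
    simp
  · rintro rfl
    exact ⟨rfl, by simp⟩

theorem factorizations_nil (n : ℕ) :
    factorizations n ([] : List A) = {List.replicate n []} := by
  ext vs
  simp only [factorizations, Set.mem_ofPred_eq, Set.mem_singleton_iff, List.flatten_eq_nil_iff,
    List.eq_replicate_iff]

theorem factorizations_succ_cons (n : ℕ) (b : A) (v : List A) :
    factorizations (n + 1) (b :: v) =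
      List.cons [] '' factorizations n (b :: v) ∪
        List.modifyHead (List.cons b) '' factorizations (n + 1) v := by
  ext vs
  simp only [factorizations, Set.mem_ofPred_eq, Set.mem_union, Set.mem_image]
  constructor
  · rintro ⟨hl, hf⟩
    match vs, hl, hf with
    | [] :: ws, hl, hf => exact .inl ⟨ws, ⟨by simpa using hl, by simpa using hf⟩, rfl⟩
    | (c :: w) :: ws, hl, hf =>
      obtain ⟨rfl, hf⟩ : c = b ∧ w ++ ws.flatten = v := by simpa using hf
      exact .inr ⟨w :: ws, ⟨by simpa using hl, by simpa using hf⟩, rfl⟩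
  · rintro (⟨ws, ⟨rfl, hf⟩, rfl⟩ | ⟨_ | ⟨w, ws⟩, ⟨hl, rfl⟩, rfl⟩)
    · simpa using hf
    · simp at hl
    · exact ⟨by simpa using hl, by simp⟩

theorem disjoint_image_cons_nil_image_modifyHead (b : A) (s t : Set (List (List A))) :
    Disjoint (List.cons [] '' s) (List.modifyHead (List.cons b) '' t) := by
  rw [Set.disjoint_left]
  rintro _ ⟨ws, -, rfl⟩ ⟨_ | ⟨w, ws'⟩, -, h⟩ <;> simp at h

theorem injOn_modifyHead_cons_factorizations (n : ℕ) (b : A) (v : List A) :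
    Set.InjOn (List.modifyHead (List.cons b)) (factorizations (n + 1) v) := by
  rintro (_ | ⟨x, xs⟩) ⟨hx, -⟩ (_ | ⟨y, ys⟩) ⟨hy, -⟩ h <;> simp_all

theorem factorizations_finite : ∀ (n : ℕ) (v : List A), (factorizations n v).Finite
  | n, [] => by
    rw [factorizations_nil]
    exact Set.finite_singleton _
  | 0, b :: v => (Set.finite_singleton []).subset fun _ h => List.length_eq_zero_iff.mp h.1
  | n + 1, b :: v => by
    rw [factorizations_succ_cons]
    exact ((factorizations_finite n (b :: v)).image _).union
      ((factorizations_finite (n + 1) v).image _)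

def reverseFactors (vs : List (List A)) : List (List A) :=
  (vs.map List.reverse).reverse

@[simp]
theorem length_reverseFactors (vs : List (List A)) : (reverseFactors vs).length = vs.length := by
  simp [reverseFactors]

theorem reverseFactors_cons (v : List A) (vs : List (List A)) :
    reverseFactors (v :: vs) = reverseFactors vs ++ [v.reverse] := by
  simp [reverseFactors]

theorem reverseFactors_involutive : Function.Involutive (reverseFactors (A := A)) := by
  intro vs
  simp [reverseFactors, List.map_reverse]

theorem factorizations_reverse (n : ℕ) (v : List A) :
    factorizations n v.reverse = reverseFactors '' factorizations n v := by
  rw [reverseFactors_involutive.image_eq_preimage_symm]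
  ext vs
  simp only [factorizations, Set.mem_ofPred_eq, Set.mem_preimage, reverseFactors,
    ← List.reverse_flatten, List.length_reverse, List.length_map, List.reverse_eq_iff]

end Factorizations

section Weight

variable {A : Type*}

/-- In `glue vs u` factor `i` is preceded by `i` letters of `u`, so `weight vs` counts the pairs
(letter of `u`, letter of `vs.flatten`) in which the letter of `u` comes first. -/
def weight (vs : List (List A)) : ℕ :=
  ∑ i ∈ Finset.range vs.length, i * (vs.getD i []).length

theorem sum_range_length_getD (vs : List (List A)) :
    ∑ i ∈ Finset.range vs.length, (vs.getD i []).length = vs.flatten.length := by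
  induction vs with
  | nil => simp
  | cons w ws ih =>
    rw [List.length_cons, Finset.sum_range_succ']
    simp only [List.getD_cons_succ, List.getD_cons_zero, ih, List.flatten_cons,
      List.length_append, add_comm]

theorem weight_cons (w : List A) (ws : List (List A)) :
    weight (w :: ws) = ws.flatten.length + weight ws := by
  simp only [weight, List.length_cons, Finset.sum_range_succ', List.getD_cons_succ,
    List.getD_cons_zero, zero_mul, zero_add, add_one_mul, Finset.sum_add_distrib,
    sum_range_length_getD, add_comm]

theorem weight_modifyHead (f : List A → List A) (vs : List (List A)) :
    weight (vs.modifyHead f) = weight vs := by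
  cases vs <;> simp [weight_cons]

theorem weight_replicate_nil (n : ℕ) : weight (List.replicate n ([] : List A)) = 0 := by
  induction n with
  | zero => simp [weight]
  | succ n ih => simp [List.replicate_succ, weight_cons, ih]

theorem weight_reverseFactors {n : ℕ} {vs : List (List A)} (h : vs.length = n + 1) :
    weight (reverseFactors vs) =
      ∑ i ∈ Finset.range vs.length, (n - i) * (vs.getD i []).length := by
  rw [weight, length_reverseFactors, ← Finset.sum_range_reflect]
  refine Finset.sum_congr rfl fun i hi => ?_
  have hin : i < n + 1 := h ▸ Finset.mem_range.mp hi
  rw [reverseFactors, List.getD_reverse _ (by simp [h])]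
  have hi' : n - (n - i) = i := by omega
  simp only [List.length_map, h, Nat.add_sub_cancel, hi', List.getD_eq_getElem?_getD,
    List.getElem?_map]
  cases vs[i]? <;> simp

end Weight

section Glue

variable {A : Type*}

theorem glue_replicate_nil : ∀ u : List A, glue (List.replicate (u.length + 1) []) u = u
  | [] => rfl
  | a :: u => congrArg (a :: ·) (glue_replicate_nil u)

theorem glue_modifyHead_cons (b : A) {vs : List (List A)} (hvs : vs ≠ []) (us : List A) :
    glue (vs.modifyHead (List.cons b)) us = b :: glue vs us := by
  obtain ⟨w, ws, rfl⟩ := List.exists_cons_of_ne_nil hvs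
  cases us <;> rfl

theorem glue_append_singleton : ∀ (us : List A) (vs : List (List A)) (w : List A) (a : A),
    vs.length = us.length + 1 → glue (vs ++ [w]) (us ++ [a]) = glue vs us ++ a :: w
  | [], [v], w, a, _ => by simp [glue]
  | c :: us, v :: vs, w, a, h => by
    simp [glue, glue_append_singleton us vs w a (by simpa using h)]

theorem reverse_glue : ∀ (us : List A) (vs : List (List A)), vs.length = us.length + 1 →
    (glue vs us).reverse = glue (reverseFactors vs) us.reverse
  | [], [v], _ => by simp [glue, reverseFactors]
  | a :: us, v :: vs, h => by
    have hlen : vs.length = us.length + 1 := by simpa using h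
    have hlen' : (reverseFactors vs).length = us.reverse.length + 1 := by simpa using hlen
    rw [reverseFactors_cons, List.reverse_cons, glue_append_singleton _ _ _ _ hlen',
      ← reverse_glue us vs hlen]
    simp [glue]

end Glue

theorem qShuffleAux_eq_finsum {A : Type*} [DecidableEq A] (u v : List A) :
    qShuffleAux u v =
      ∑ᶠ vs ∈ factorizations (u.length + 1) v,
        Finsupp.single (glue vs u) ((Polynomial.X : Polynomial ℕ) ^ weight vs) := by
  induction u, v using qShuffleAux.induct with
  | case1 v =>
    rw [List.length_nil, factorizations_one, finsum_mem_singleton]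
    simp [qShuffleAux, glue, weight]
  | case2 a u =>
    rw [factorizations_nil, finsum_mem_singleton, glue_replicate_nil, weight_replicate_nil]
    simp [qShuffleAux]
  | case3 a u b v ih₁ ih₂ =>
    have hfin₁ := factorizations_finite (u.length + 1) (b :: v)
    have hfin₂ := factorizations_finite (u.length + 1 + 1) v
    rw [List.length_cons] at ih₂ ⊢
    rw [qShuffleAux, ih₁, ih₂, ← Finsupp.mapDomain.addMonoidHom_apply,
      ← Finsupp.mapDomain.addMonoidHom_apply,
      (Finsupp.mapDomain.addMonoidHom _).map_finsum_mem _ hfin₁,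
      (Finsupp.mapDomain.addMonoidHom _).map_finsum_mem _ hfin₂, smul_finsum_mem hfin₁,
      factorizations_succ_cons (u.length + 1),
      finsum_mem_union (disjoint_image_cons_nil_image_modifyHead b _ _) (hfin₁.image _)
        (hfin₂.image _),
      finsum_mem_image List.cons_injective.injOn,
      finsum_mem_image (injOn_modifyHead_cons_factorizations _ b v)]
    congr 1
    · refine finsum_mem_congr rfl fun ws ⟨_, hws⟩ => ?_
      simp [weight_cons, hws, pow_add, glue]
    · refine finsum_mem_congr rfl fun ws ⟨hws, _⟩ => ?_
      have hne : ws ≠ [] := List.ne_nil_of_length_pos (by omega)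
      simp [weight_modifyHead, glue_modifyHead_cons b hne]

theorem qShuffle_eq_sum_factorizations_left_general (A : Type*) [DecidableEq A]
    (u v : List A) :
    qShuffle u v =
      ∑ᶠ vs ∈ {vs : List (List A) | vs.length = u.length + 1 ∧ vs.flatten = v},
        Finsupp.single (glue vs u)
          ((Polynomial.X : Polynomial ℕ) ^
            ∑ i ∈ Finset.range vs.length, (u.length - i) * (vs.getD i []).length) := by
  change _ = ∑ᶠ vs ∈ factorizations (u.length + 1) v, _
  rw [qShuffle, qShuffleAux_eq_finsum, List.length_reverse,
    ← Finsupp.mapDomain.addMonoidHom_apply,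
    (Finsupp.mapDomain.addMonoidHom _).map_finsum_mem _ (factorizations_finite _ _),
    factorizations_reverse, finsum_mem_image reverseFactors_involutive.injective.injOn]
  refine finsum_mem_congr rfl fun vs ⟨hvs, _⟩ => ?_
  rw [Finsupp.mapDomain.addMonoidHom_apply, Finsupp.mapDomain_single, ← reverse_glue u vs hvs,
    List.reverse_reverse, weight_reverseFactors hvs]

/-- `(a₁⋯a_k) ⧢_q v = Σ q^{Σ_{i=0}^k (k-i)·|vᵢ|} · (v₀ a₁ v₁ a₂ ⋯ v_{k-1} a_k v_k)`,
the sum ranging over all factorizations `v = v₀ v₁ ⋯ v_k` (with `k = |u|`). -/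
theorem qShuffle_eq_sum_factorizations_left (A : Type*) [Fintype A] [DecidableEq A]
    (u v : List A) :
    qShuffle u v =
      ∑ᶠ vs ∈ {vs : List (List A) | vs.length = u.length + 1 ∧ vs.flatten = v},
        Finsupp.single (glue vs u)
          ((Polynomial.X : Polynomial ℕ) ^
            ∑ i ∈ Finset.range vs.length, (u.length - i) * (vs.getD i []).length) :=
  qShuffle_eq_sum_factorizations_left_general A u v
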